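/- arXiv:2103.14925 — 7 statements merged into one kernel-verified Lean document; each statement's English description precedes it below -/
import Mathlib

section
/- Let N ≥ 1 and b = (b_0, …, b_d) ∈ ℤ^{d+1} with b_0 + … + b_d ≡ 0 (mod N) and gcd(N, b_0, …, b_d) = 1. Let Δ = conv(0, e_1, …, e_d) ⊂ ℝ^d and let Λ ⊂ ℝ^d be the additive subgroup generated by ℤ^d together with the point (1/N)(b_1, …, b_d). Then Λ ∩ Δ = {0, e_1, …, e_d} (i.e., the cyclic simplex is empty) if and only if for every j ∈ {1, …, N−1} one has Σ_{i=0}^{d} ((j·b_i) mod N) ≠ N, where x mod N denotes the representative of x in {0, 1, …, N−1}. -/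
open Set

/-- The set of integer points of `ℝ^n`. -/
def intPoints (n : ℕ) : Set (Fin n → ℝ) := {x | ∀ i, ∃ z : ℤ, x i = (z : ℝ)}

/-- The vertices `0, e_1, …, e_d` of the standard simplex in `ℝ^d`. -/
def stdVert (d : ℕ) : Fin (d+1) → Fin d → ℝ :=
  fun i j => if (i : ℕ) = (j : ℕ) + 1 then 1 else 0

lemma simplex_mem (d : ℕ) (x : Fin d → ℝ) :
    x ∈ convexHull ℝ (Set.range (stdVert d)) ↔ (∀ i, 0 ≤ x i) ∧ ∑ i, x i ≤ 1 := by
  have hs := convexHull_basis_eq_stdSimplex (R := ℝ) (Fin (d+1))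
  have key : convexHull ℝ (Set.range (stdVert d)) =
      (LinearMap.funLeft ℝ ℝ Fin.succ) '' stdSimplex ℝ (Fin (d+1)) := by
    rw [← hs, LinearMap.image_convexHull, ← Set.range_comp]
    apply congrArg (convexHull ℝ)
    apply congrArg Set.range
    funext i j
    simp only [Function.comp_apply, LinearMap.funLeft_apply, stdVert]
    by_cases h : (i : ℕ) = (j : ℕ) + 1
    · rw [if_pos h, if_pos (by exact Fin.ext (by simpa using h))]
    · rw [if_neg h, if_neg (by intro hh; exact h (by simpa using congrArg Fin.val hh))]
  rw [key]
  constructor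
  · rintro ⟨y, ⟨hy0, hy1⟩, rfl⟩
    refine ⟨fun i => hy0 _, ?_⟩
    have h := Fin.sum_univ_succ y
    rw [hy1] at h
    have h2 : ∑ i : Fin d, (LinearMap.funLeft ℝ ℝ Fin.succ) y i = ∑ i : Fin d, y i.succ := rfl
    rw [h2]
    linarith [hy0 0]
  · rintro ⟨h0, h1⟩
    refine ⟨Fin.cons (1 - ∑ i, x i) x, ⟨?_, ?_⟩, ?_⟩
    · intro i
      induction i using Fin.cases with
      | zero => simpa using h1
      | succ j => simpa using h0 j
    · rw [Fin.sum_univ_succ]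
      simp
    · funext j
      simp [LinearMap.funLeft_apply]

lemma lat_mem (d N : ℕ) (b : Fin (d+1) → ℤ) (x : Fin d → ℝ) :
    x ∈ (AddSubgroup.closure
        (intPoints d ∪ {fun j : Fin d => (b j.succ : ℝ) / (N : ℝ)}) :
          AddSubgroup (Fin d → ℝ)) ↔
    ∃ j : ℤ, ∀ i, ∃ z : ℤ, x i = (z : ℝ) + (j : ℝ) * (b i.succ : ℝ) / (N : ℝ) := by
  set v : Fin d → ℝ := fun j => (b j.succ : ℝ) / (N : ℝ) with hv
  set L : AddSubgroup (Fin d → ℝ) :=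
    { carrier := {x | ∃ j : ℤ, ∀ i, ∃ z : ℤ, x i = (z : ℝ) + (j : ℝ) * (b i.succ : ℝ) / (N : ℝ)}
      zero_mem' := ⟨0, fun i => ⟨0, by simp⟩⟩
      add_mem' := by
        rintro p q ⟨j, hj⟩ ⟨k, hk⟩
        refine ⟨j + k, fun i => ?_⟩
        obtain ⟨z, hz⟩ := hj i
        obtain ⟨w, hw⟩ := hk i
        refine ⟨z + w, ?_⟩
        show p i + q i = _
        rw [hz, hw]
        push_cast
        ring
      neg_mem' := by
        rintro p ⟨j, hj⟩
        refine ⟨-j, fun i => ?_⟩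
        obtain ⟨z, hz⟩ := hj i
        refine ⟨-z, ?_⟩
        show -(p i) = _
        rw [hz]
        push_cast
        ring } with hL
  constructor
  · intro hx
    have hle : AddSubgroup.closure (intPoints d ∪ {v}) ≤ L := by
      rw [AddSubgroup.closure_le]
      rintro y (hy | hy)
      · exact ⟨0, fun i => by obtain ⟨z, hz⟩ := hy i; exact ⟨z, by rw [hz]; push_cast; ring⟩⟩
      · rw [Set.mem_singleton_iff] at hy
        exact ⟨1, fun i => ⟨0, by rw [hy]; push_cast; ring⟩⟩
    exact hle hx
  · rintro ⟨j, hj⟩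
    choose z hz using hj
    have hint : (fun i => (z i : ℝ)) ∈ AddSubgroup.closure (intPoints d ∪ {v}) :=
      AddSubgroup.subset_closure (Or.inl (fun i => ⟨z i, rfl⟩))
    have hvm : v ∈ AddSubgroup.closure (intPoints d ∪ {v}) :=
      AddSubgroup.subset_closure (Or.inr rfl)
    have hx : x = (fun i => (z i : ℝ)) + j • v := by
      funext i
      have := hz i
      simp only [Pi.add_apply, Pi.smul_apply, smul_eq_mul, hv]
      rw [this, zsmul_eq_mul]
      ring
    rw [hx]
    exact AddSubgroup.add_mem _ hint (AddSubgroup.zsmul_mem _ hvm j)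

lemma stdVert_int (d : ℕ) (k : Fin (d+1)) : stdVert d k ∈ intPoints d := by
  intro j
  refine ⟨if (k : ℕ) = (j : ℕ) + 1 then 1 else 0, ?_⟩
  simp only [stdVert]
  split_ifs <;> simp

lemma int_simplex (d : ℕ) (x : Fin d → ℝ) (hx : ∀ i, ∃ z : ℤ, x i = (z : ℝ))
    (h0 : ∀ i, 0 ≤ x i) (h1 : ∑ i, x i ≤ 1) : x ∈ Set.range (stdVert d) := by
  choose z hz using hx
  have hz0 : ∀ i, 0 ≤ z i := fun i => by
    have := h0 i; rw [hz i] at this; exact_mod_cast this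
  have hzsum : ∑ i, z i ≤ 1 := by
    have : ((∑ i, z i : ℤ) : ℝ) ≤ 1 := by
      push_cast
      calc ∑ i, (z i : ℝ) = ∑ i, x i := by
            exact Finset.sum_congr rfl (fun i _ => (hz i).symm)
        _ ≤ 1 := h1
    exact_mod_cast this
  by_cases hall : ∀ i, z i = 0
  · refine ⟨0, ?_⟩
    funext j
    simp only [stdVert]
    rw [if_neg (by simp), hz j, hall j]
    simp
  · push_neg at hall
    obtain ⟨i0, hi0⟩ := hall
    have hi1 : 1 ≤ z i0 := by have := hz0 i0; omega
    have hsplit : z i0 + ∑ i ∈ Finset.univ.erase i0, z i = ∑ i, z i :=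
      Finset.add_sum_erase _ _ (Finset.mem_univ i0)
    have herase0 : 0 ≤ ∑ i ∈ Finset.univ.erase i0, z i :=
      Finset.sum_nonneg (fun i _ => hz0 i)
    have hzi0 : z i0 = 1 := by omega
    have herase : ∀ i ∈ Finset.univ.erase i0, z i = 0 := by
      rw [← Finset.sum_eq_zero_iff_of_nonneg (fun i _ => hz0 i)]
      omega
    refine ⟨i0.succ, ?_⟩
    funext j
    simp only [stdVert]
    by_cases hj : j = i0
    · rw [if_pos (by simp [hj]), hz j, hj, hzi0]
      simp
    · rw [if_neg (by simpa [Fin.ext_iff] using fun h => hj (Fin.ext h.symm)), hz j,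
        herase j (Finset.mem_erase.mpr ⟨hj, Finset.mem_univ j⟩)]
      simp

lemma gcd_dvd_aux (d : ℕ) (N : ℕ) (b : Fin (d+1) → ℤ)
    (hgcd : Int.gcd (N : ℤ) (Finset.univ.gcd b) = 1) (j : ℤ)
    (h : ∀ i, (N : ℤ) ∣ j * b i) : (N : ℤ) ∣ j := by
  have h1 : (N : ℤ) ∣ Finset.univ.gcd (fun i => j * b i) :=
    Finset.dvd_gcd (fun i _ => h i)
  rw [Finset.gcd_mul_left] at h1
  have hco : IsCoprime (N : ℤ) (Finset.univ.gcd b) := Int.isCoprime_iff_gcd_eq_one.mpr hgcd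
  have h2 : (N : ℤ) ∣ normalize j := hco.dvd_of_dvd_mul_right h1
  rw [← Int.abs_eq_normalize] at h2
  exact (dvd_abs _ _).mp h2

theorem stmt1 (d : ℕ) (N : ℕ) (hN : 1 ≤ N) (b : Fin (d+1) → ℤ)
    (hsum : (N : ℤ) ∣ ∑ i, b i)
    (hgcd : Int.gcd (N : ℤ) (Finset.univ.gcd b) = 1) :
    ((AddSubgroup.closure
        (intPoints d ∪ {fun j : Fin d => (b j.succ : ℝ) / (N : ℝ)}) :
          AddSubgroup (Fin d → ℝ)) : Set (Fin d → ℝ))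
      ∩ convexHull ℝ (Set.range (stdVert d)) = Set.range (stdVert d)
    ↔ ∀ j : ℤ, 1 ≤ j → j ≤ (N : ℤ) - 1 →
        (∑ i : Fin (d+1), (j * b i) % (N : ℤ)) ≠ (N : ℤ) := by
  have hN0 : (0 : ℤ) < (N : ℤ) := by exact_mod_cast hN
  have hNne : ((N : ℤ)) ≠ 0 := ne_of_gt hN0
  have hNR : (0 : ℝ) < (N : ℝ) := by exact_mod_cast hN
  have hNRne : ((N : ℝ)) ≠ 0 := ne_of_gt hNR
  constructor
  · intro heq j hj1 hj2 hcontra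
    set x : Fin d → ℝ := fun i => (((j * b i.succ) % (N : ℤ) : ℤ) : ℝ) / (N : ℝ) with hxdef
    have hr0 : ∀ i : Fin (d+1), 0 ≤ (j * b i) % (N : ℤ) := fun i => Int.emod_nonneg _ hNne
    have hrN : ∀ i : Fin (d+1), (j * b i) % (N : ℤ) < (N : ℤ) :=
      fun i => Int.emod_lt_of_pos _ hN0
    have hmemL : x ∈ (AddSubgroup.closure
        (intPoints d ∪ {fun j : Fin d => (b j.succ : ℝ) / (N : ℝ)}) :
          AddSubgroup (Fin d → ℝ)) := by
      rw [lat_mem]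
      refine ⟨j, fun i => ⟨-((j * b i.succ) / (N : ℤ)), ?_⟩⟩
      have hd : (j * b i.succ) % (N : ℤ) = j * b i.succ - (N : ℤ) * ((j * b i.succ) / (N : ℤ)) :=
        Int.emod_def _ _
      rw [hxdef]
      simp only
      rw [hd]
      push_cast
      field_simp
      ring
    have hmemS : x ∈ convexHull ℝ (Set.range (stdVert d)) := by
      rw [simplex_mem]
      constructor
      · intro i
        apply div_nonneg _ (le_of_lt hNR)
        exact_mod_cast hr0 i.succ
      · have hsum2 : ∑ i : Fin d, ((j * b i.succ) % (N : ℤ)) ≤ (N : ℤ) := by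
          have := Fin.sum_univ_succ (fun i : Fin (d+1) => (j * b i) % (N : ℤ))
          rw [hcontra] at this
          have h0 := hr0 0
          omega
        rw [hxdef]
        simp only
        rw [← Finset.sum_div, div_le_one hNR]
        exact_mod_cast hsum2
    have hxv : x ∈ Set.range (stdVert d) := by
      rw [← heq]; exact ⟨hmemL, hmemS⟩
    obtain ⟨k, hk⟩ := hxv
    have hlt : ∀ i, x i < 1 := by
      intro i
      rw [hxdef]
      simp only
      rw [div_lt_one hNR]
      exact_mod_cast hrN i.succ
    by_cases hk0 : k = 0
    · have hx0 : ∀ i : Fin d, (j * b i.succ) % (N : ℤ) = 0 := by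
        intro i
        have : x i = 0 := by
          rw [← hk, hk0]
          simp [stdVert]
        rw [hxdef] at this
        simp only at this
        rw [div_eq_zero_iff] at this
        rcases this with h | h
        · exact_mod_cast h
        · exact absurd h hNRne
      have : ∑ i : Fin (d+1), (j * b i) % (N : ℤ) = (j * b 0) % (N : ℤ) := by
        rw [Fin.sum_univ_succ]
        simp [hx0]
      rw [this] at hcontra
      have := hrN 0
      omega
    · have hkpos : 1 ≤ (k : ℕ) := by
        rcases Nat.eq_zero_or_pos (k : ℕ) with h | h
        · exact absurd (Fin.ext h) hk0
        · exact h
      have hklt : (k : ℕ) - 1 < d := by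
        have := k.isLt
        omega
      set i0 : Fin d := ⟨(k : ℕ) - 1, hklt⟩ with hi0
      have : x i0 = 1 := by
        rw [← hk]
        simp only [stdVert, hi0]
        rw [if_pos (by omega)]
      linarith [hlt i0]
  · intro H
    apply Set.Subset.antisymm
    · rintro x ⟨hxL, hxS⟩
      rw [SetLike.mem_coe, lat_mem] at hxL
      obtain ⟨j, hj⟩ := hxL
      rw [simplex_mem] at hxS
      obtain ⟨hx0, hx1⟩ := hxS
      set j' : ℤ := j % (N : ℤ) with hj'def
      have hjrep : ∀ i, ∃ z : ℤ, x i = (z : ℝ) + (j' : ℝ) * (b i.succ : ℝ) / (N : ℝ) := by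
        intro i
        obtain ⟨z, hz⟩ := hj i
        refine ⟨z + (j / (N : ℤ)) * b i.succ, ?_⟩
        rw [hz]
        have hjj : (j : ℝ) = (N : ℝ) * ((j / (N : ℤ) : ℤ) : ℝ) + (j' : ℝ) := by
          exact_mod_cast congrArg (Int.cast : ℤ → ℝ) (Int.mul_ediv_add_emod j (N : ℤ)).symm
        push_cast
        rw [hjj]
        field_simp
        ring
      have hj'0 : 0 ≤ j' := Int.emod_nonneg j hNne
      have hj'N : j' < (N : ℤ) := Int.emod_lt_of_pos j hN0
      by_cases hzc : j' = 0
      · apply int_simplex d x _ hx0 hx1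
        intro i
        obtain ⟨z, hz⟩ := hjrep i
        rw [hzc] at hz
        exact ⟨z, by rw [hz]; simp⟩
      · exfalso
        choose z hz using hjrep
        set m : Fin d → ℤ := fun i => (N : ℤ) * z i + j' * b i.succ with hmdef
        have hxm : ∀ i, x i = ((m i : ℤ) : ℝ) / (N : ℝ) := by
          intro i
          rw [hz i, hmdef]
          push_cast
          field_simp
        have hm0 : ∀ i, 0 ≤ m i := by
          intro i
          have := hx0 i
          rw [hxm i, le_div_iff₀ hNR, zero_mul] at this
          exact_mod_cast this
        have hmsum : ∑ i, m i ≤ (N : ℤ) := by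
          have : ((∑ i, m i : ℤ) : ℝ) ≤ (N : ℝ) := by
            push_cast
            have : ∑ i, ((m i : ℤ) : ℝ) / (N : ℝ) ≤ 1 := by
              calc ∑ i, ((m i : ℤ) : ℝ) / (N : ℝ) = ∑ i, x i :=
                    Finset.sum_congr rfl (fun i _ => (hxm i).symm)
                _ ≤ 1 := hx1
            rw [← Finset.sum_div, div_le_one hNR] at this
            exact this
          exact_mod_cast this
        set r : Fin (d+1) → ℤ := fun i => (j' * b i) % (N : ℤ) with hrdef
        have hr0 : ∀ i, 0 ≤ r i := fun i => Int.emod_nonneg _ hNne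
        have hrN : ∀ i, r i < (N : ℤ) := fun i => Int.emod_lt_of_pos _ hN0
        have hrm : ∀ i : Fin d, r i.succ ≤ m i := by
          intro i
          have hmod : m i % (N : ℤ) = r i.succ := by
            show ((N : ℤ) * z i + j' * b i.succ) % (N : ℤ) = (j' * b i.succ) % (N : ℤ)
            rw [add_comm]
            exact Int.add_mul_emod_self_left ..
          have hdivnn : 0 ≤ m i / (N : ℤ) := Int.ediv_nonneg (hm0 i) (le_of_lt hN0)
          have hDef : m i % (N : ℤ) = m i - (N : ℤ) * (m i / (N : ℤ)) := Int.emod_def _ _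
          nlinarith [hm0 i]
        have hNS : (N : ℤ) ∣ ∑ i, r i := by
          have h1 : (∑ i, j' * b i) % (N : ℤ) = (∑ i, r i) % (N : ℤ) := Finset.sum_int_mod _ _ _
          have h2 : (∑ i, j' * b i) % (N : ℤ) = 0 := by
            rw [← Finset.mul_sum]
            exact Int.emod_eq_zero_of_dvd (Dvd.dvd.mul_left hsum j')
          exact Int.dvd_of_emod_eq_zero (by rw [← h1, h2])
        have hS0 : 0 ≤ ∑ i, r i := Finset.sum_nonneg (fun i _ => hr0 i)
        have hSne : ∑ i, r i ≠ 0 := by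
          intro h0
          have hall : ∀ i ∈ Finset.univ, r i = 0 :=
            (Finset.sum_eq_zero_iff_of_nonneg (fun i _ => hr0 i)).mp h0
          have hdvd : ∀ i, (N : ℤ) ∣ j' * b i :=
            fun i => Int.dvd_of_emod_eq_zero (hall i (Finset.mem_univ i))
          have hNj : (N : ℤ) ∣ j' := gcd_dvd_aux d N b hgcd j' hdvd
          have := Int.le_of_dvd (lt_of_le_of_ne hj'0 (Ne.symm hzc)) hNj
          omega
        have hSpos : 0 < ∑ i, r i := lt_of_le_of_ne hS0 (Ne.symm hSne)
        have hSneN : ∑ i, r i ≠ (N : ℤ) := H j' (by omega) (by omega)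
        obtain ⟨c, hc⟩ := hNS
        have hc1 : 1 ≤ c := by nlinarith
        have hc2 : c ≠ 1 := by
          rintro rfl
          rw [mul_one] at hc
          exact hSneN hc
        have hc2' : 2 ≤ c := by omega
        have hS2N : 2 * (N : ℤ) ≤ ∑ i, r i := by nlinarith
        have hupper : ∑ i, r i ≤ 2 * (N : ℤ) - 1 := by
          rw [Fin.sum_univ_succ]
          have h1 : r 0 ≤ (N : ℤ) - 1 := by have := hrN 0; omega
          have h2 : ∑ i : Fin d, r i.succ ≤ ∑ i, m i := Finset.sum_le_sum (fun i _ => hrm i)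
          linarith [hmsum]
        omega
    · rintro x ⟨k, rfl⟩
      refine ⟨?_, subset_convexHull ℝ _ (Set.mem_range_self k)⟩
      exact AddSubgroup.subset_closure (Or.inl (stdVert_int d k))
end

section
/- Let N ≥ 2, d ≥ 1, and let k ∈ ℤ satisfy Σ_{i=0}^{d} k^i ≡ 0 (mod N). Let Δ = conv(0, e_1, …, e_d) ⊂ ℝ^d and let Λ ⊂ ℝ^d be the additive subgroup generated by ℤ^d together with the point (1/N)(k, k^2, …, k^d). If k is not a primitive (d+1)-th root of unity modulo N, i.e., there exist 0 ≤ i < j ≤ d with k^i ≡ k^j (mod N), then there exists a nonzero linear functional f : ℝ^d → ℝ with f(Λ) ⊆ ℤ such that max_{x∈Δ} f(x) − min_{x∈Δ} f(x) ≤ 2; that is, the lattice width of Δ with respect to Λ is at most two. -/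
open Set

/-!
A vector `a ∈ ℤ^{d+1}` with `∑ a_l k^l ≡ 0 (mod N)` gives the functional
`x ↦ ∑_m (a_{m+1} - a_0) x_m`, which is integral on `Λ` because `∑_l k^l ≡ 0 (mod N)`, and whose
values at the vertices `e_0 = 0, e_1, …, e_d` of `Δ` are `a_l - a_0`; so the width of `Δ` in that
direction is `max a - min a`. A congruence `k^i ≡ k^j` makes `a = e_i - e_j` admissible, of width 2.
-/

lemma exists_int_eq_of_mem_closure {G : Type*} [AddGroup G] (f : G →+ ℝ) {s : Set G}
    (hs : ∀ x ∈ s, ∃ z : ℤ, f x = z) :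
    ∀ x ∈ AddSubgroup.closure s, ∃ z : ℤ, f x = z := by
  have hle : AddSubgroup.closure s ≤ (Int.castAddHom ℝ).range.comap f :=
    (AddSubgroup.closure_le _).mpr fun x hx => by
      obtain ⟨z, hz⟩ := hs x hx
      exact ⟨z, by simp [hz]⟩
  intro x hx
  obtain ⟨z, hz⟩ := hle hx
  exact ⟨z, by simpa using hz.symm⟩

lemma sSup_sub_sInf_image_convexHull_le {E : Type*} [AddCommGroup E] [Module ℝ E]
    (f : E →ₗ[ℝ] ℝ) {s : Set E} (hs : s.Nonempty) {lo hi : ℝ}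
    (hf : ∀ x ∈ s, f x ∈ Icc lo hi) :
    sSup (f '' convexHull ℝ s) - sInf (f '' convexHull ℝ s) ≤ hi - lo := by
  have hsub : f '' convexHull ℝ s ⊆ Icc lo hi := by
    rw [LinearMap.image_convexHull]
    exact convexHull_min (image_subset_iff.mpr hf) (convex_Icc lo hi)
  have hne : (f '' convexHull ℝ s).Nonempty := (hs.mono (subset_convexHull ℝ s)).image f
  have hsup : sSup (f '' convexHull ℝ s) ≤ hi := csSup_le hne fun y hy => (hsub hy).2
  have hinf : lo ≤ sInf (f '' convexHull ℝ s) := le_csInf hne fun y hy => (hsub hy).1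
  linarith

section

variable {d : ℕ}

noncomputable def coeffFunctional (c : Fin d → ℤ) : (Fin d → ℝ) →ₗ[ℝ] ℝ :=
  ∑ m, (c m : ℝ) • LinearMap.proj m

@[simp]
lemma coeffFunctional_apply (c : Fin d → ℤ) (x : Fin d → ℝ) :
    coeffFunctional c x = ∑ m, (c m : ℝ) * x m := by
  simp [coeffFunctional]

lemma coeffFunctional_single (c : Fin d → ℤ) (m : Fin d) :
    coeffFunctional c (Pi.single m 1) = c m := by
  simp [Pi.single_apply]

lemma stdVert_zero : stdVert d 0 = 0 := by
  ext j
  simp [stdVert]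

lemma stdVert_succ (m : Fin d) : stdVert d m.succ = Pi.single m 1 := by
  ext j
  simp [stdVert, Pi.single_apply, Fin.ext_iff, eq_comm]

lemma coeffFunctional_int_on_lattice (N : ℕ) (k : ℤ) (c : Fin d → ℤ)
    (hdvd : (N : ℤ) ∣ ∑ m, c m * k ^ ((m : ℕ) + 1)) :
    ∀ x ∈ AddSubgroup.closure
        (intPoints d ∪ {fun j : Fin d => ((k ^ ((j : ℕ) + 1) : ℤ) : ℝ) / (N : ℝ)}),
      ∃ z : ℤ, coeffFunctional c x = z := by
  refine exists_int_eq_of_mem_closure (coeffFunctional c).toAddMonoidHom ?_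
  rintro x (hx | rfl)
  · choose z hz using hx
    exact ⟨∑ m, c m * z m, by simp [hz]⟩
  · obtain ⟨t, ht⟩ := hdvd
    rcases eq_or_ne (N : ℝ) 0 with hN | hN
    · exact ⟨0, by simp [hN]⟩
    · refine ⟨t, ?_⟩
      have hsum : ((∑ m, c m * k ^ ((m : ℕ) + 1) : ℤ) : ℝ) = N * t := by exact_mod_cast ht
      simp only [LinearMap.toAddMonoidHom_coe, coeffFunctional_apply, mul_div_assoc',
        ← Finset.sum_div, ← Int.cast_mul, ← Int.cast_sum]
      rw [hsum, mul_div_cancel_left₀ _ hN]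

lemma sum_succ_sub_zero_mul_pow (a : Fin (d + 1) → ℤ) (k : ℤ) :
    ∑ m : Fin d, (a m.succ - a 0) * k ^ ((m : ℕ) + 1)
      = ∑ l, a l * k ^ (l : ℕ) - a 0 * ∑ l : Fin (d + 1), k ^ (l : ℕ) := by
  simp only [Fin.sum_univ_succ, Fin.val_zero, pow_zero, Fin.val_succ, sub_mul, mul_add,
    Finset.sum_sub_distrib, Finset.mul_sum]
  ring

end

theorem exists_functional_width_le {d N : ℕ} {k : ℤ}
    (hroot : (N : ℤ) ∣ ∑ l : Fin (d + 1), k ^ (l : ℕ)) (a : Fin (d + 1) → ℤ)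
    (hdvd : (N : ℤ) ∣ ∑ l, a l * k ^ (l : ℕ)) (hne : ∃ l l', a l ≠ a l') {lo hi : ℤ}
    (hrange : ∀ l, a l ∈ Icc lo hi) :
    ∃ f : (Fin d → ℝ) →ₗ[ℝ] ℝ, f ≠ 0 ∧
      (∀ x ∈ AddSubgroup.closure
          (intPoints d ∪ {fun j : Fin d => ((k ^ ((j : ℕ) + 1) : ℤ) : ℝ) / (N : ℝ)}),
        ∃ z : ℤ, f x = (z : ℝ)) ∧
      sSup (f '' convexHull ℝ (Set.range (stdVert d)))
        - sInf (f '' convexHull ℝ (Set.range (stdVert d))) ≤ hi - lo := by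
  set c : Fin d → ℤ := fun m => a m.succ - a 0
  have hvert : ∀ l, coeffFunctional c (stdVert d l) = ((a l - a 0 : ℤ) : ℝ) := by
    refine Fin.cases ?_ fun m => ?_
    · simp [stdVert_zero]
    · rw [stdVert_succ, coeffFunctional_single]
  refine ⟨coeffFunctional c, ?_, coeffFunctional_int_on_lattice N k c ?_, ?_⟩
  · intro h0
    obtain ⟨l, l', hll'⟩ := hne
    have hconst : ∀ l, a l = a 0 := fun l => by
      have h := hvert l
      rw [h0, LinearMap.zero_apply] at h
      exact sub_eq_zero.mp (by exact_mod_cast h.symm)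
    exact hll' ((hconst l).trans (hconst l').symm)
  · rw [sum_succ_sub_zero_mul_pow]
    exact dvd_sub hdvd (dvd_mul_of_dvd_right hroot _)
  · have hwidth := sSup_sub_sInf_image_convexHull_le (coeffFunctional c) (range_nonempty _)
      (lo := lo - a 0) (hi := hi - a 0) <| forall_mem_range.mpr fun l => by
        rw [hvert, ← Int.cast_sub, ← Int.cast_sub, mem_Icc, Int.cast_le, Int.cast_le]
        exact ⟨sub_le_sub_right (hrange l).1 _, sub_le_sub_right (hrange l).2 _⟩
    linarith

theorem stmt2_general (d N : ℕ) (k : ℤ)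
    (hroot : (N : ℤ) ∣ ∑ i ∈ Finset.range (d+1), k ^ i)
    (hnonprim : ∃ i j : ℕ, i < j ∧ j ≤ d ∧ (N : ℤ) ∣ k ^ j - k ^ i) :
    ∃ f : (Fin d → ℝ) →ₗ[ℝ] ℝ, f ≠ 0 ∧
      (∀ x ∈ AddSubgroup.closure
          (intPoints d ∪ {fun j : Fin d => ((k ^ ((j : ℕ) + 1) : ℤ) : ℝ) / (N : ℝ)}),
        ∃ z : ℤ, f x = (z : ℝ)) ∧
      sSup (f '' convexHull ℝ (Set.range (stdVert d)))
        - sInf (f '' convexHull ℝ (Set.range (stdVert d))) ≤ 2 := by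
  obtain ⟨i, j, hij, hjd, hdvd⟩ := hnonprim
  let i' : Fin (d + 1) := ⟨i, by omega⟩
  let j' : Fin (d + 1) := ⟨j, by omega⟩
  have hi'j' : i' ≠ j' := Fin.ne_of_val_ne hij.ne
  let a : Fin (d + 1) → ℤ := Pi.single i' 1 - Pi.single j' 1
  have hsum : ∑ l, a l * k ^ (l : ℕ) = k ^ i - k ^ j := by
    simp [a, sub_mul, Finset.sum_sub_distrib, Pi.single_apply, i', j']
  have hne : a i' ≠ a j' := by simp [a, hi'j', hi'j'.symm]
  have hrange : ∀ l, a l ∈ Icc (-1) 1 := fun l => by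
    simp only [a, Pi.sub_apply, Pi.single_apply]
    constructor <;> split_ifs <;> norm_num
  rw [← Fin.sum_univ_eq_sum_range] at hroot
  obtain ⟨f, hf0, hfint, hfwidth⟩ :=
    exists_functional_width_le hroot a (hsum ▸ dvd_sub_comm.mp hdvd) ⟨i', j', hne⟩ hrange
  exact ⟨f, hf0, hfint, hfwidth.trans_eq (by norm_num)⟩

theorem stmt2 (d N : ℕ) (hN : 2 ≤ N) (hd : 1 ≤ d) (k : ℤ)
    (hroot : (N : ℤ) ∣ ∑ i ∈ Finset.range (d+1), k ^ i)
    (hnonprim : ∃ i j : ℕ, i < j ∧ j ≤ d ∧ (N : ℤ) ∣ k ^ j - k ^ i) :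
    ∃ f : (Fin d → ℝ) →ₗ[ℝ] ℝ, f ≠ 0 ∧
      (∀ x ∈ AddSubgroup.closure
          (intPoints d ∪ {fun j : Fin d => ((k ^ ((j : ℕ) + 1) : ℤ) : ℝ) / (N : ℝ)}),
        ∃ z : ℤ, f x = (z : ℝ)) ∧
      sSup (f '' convexHull ℝ (Set.range (stdVert d)))
        - sInf (f '' convexHull ℝ (Set.range (stdVert d))) ≤ 2 :=
  stmt2_general d N k hroot hnonprim
end

section
/- Let N be a prime, let d ≥ 1 be such that d+1 = a·b with integers a, b ≥ 2, and let k ∈ ℤ satisfy Σ_{i=0}^{d} k^i ≡ 0 (mod N). Let Δ = conv(0, e_1, …, e_d) ⊂ ℝ^d and let Λ ⊂ ℝ^d be the additive subgroup generated by ℤ^d together with the point (1/N)(k, k^2, …, k^d). Then there exists a nonzero linear functional f : ℝ^d → ℝ with f(Λ) ⊆ ℤ such that max_{x∈Δ} f(x) − min_{x∈Δ} f(x) ≤ 1; that is, the lattice width of Δ with respect to Λ is at most one. -/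
open Set

lemma geom_factor (a b : ℕ) (k : ℤ) :
    ∑ i ∈ Finset.range (a*b), k ^ i
      = (∑ i ∈ Finset.range a, k ^ i) * (∑ j ∈ Finset.range b, (k^a) ^ j) := by
  induction b with
  | zero => simp
  | succ b ih =>
      rw [Finset.sum_range_succ, Nat.mul_succ, Finset.sum_range_add, ih, mul_add]
      congr 1
      rw [Finset.sum_mul]
      refine Finset.sum_congr rfl fun i _ => ?_
      rw [pow_add, pow_mul, mul_comm]

lemma key (d N : ℕ) (hN : N ≠ 0) (s : Finset (Fin d)) (hs : s.Nonempty) (k : ℤ)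
    (hdiv : (N:ℤ) ∣ ∑ j ∈ s, k ^ ((j:ℕ)+1)) :
    ∃ f : (Fin d → ℝ) →ₗ[ℝ] ℝ, f ≠ 0 ∧
      (∀ x ∈ AddSubgroup.closure
          (intPoints d ∪ {fun j : Fin d => ((k ^ ((j : ℕ) + 1) : ℤ) : ℝ) / (N : ℝ)}),
        ∃ z : ℤ, f x = (z : ℝ)) ∧
      sSup (f '' convexHull ℝ (Set.range (stdVert d)))
        - sInf (f '' convexHull ℝ (Set.range (stdVert d))) ≤ 1 := by
  classical
  set f : (Fin d → ℝ) →ₗ[ℝ] ℝ := ∑ j ∈ s, LinearMap.proj j with hf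
  have hfx : ∀ x : Fin d → ℝ, f x = ∑ j ∈ s, x j := by
    intro x
    simp [hf, LinearMap.proj_apply]
  obtain ⟨j0, hj0⟩ := hs
  refine ⟨f, ?_, ?_, ?_⟩
  · intro h
    have : f (Pi.single j0 1) = 0 := by rw [h]; rfl
    rw [hfx] at this
    rw [Finset.sum_eq_single j0 (fun b _ hb => Pi.single_eq_of_ne hb 1)
      (fun h => absurd hj0 h)] at this
    simp at this
  · -- integrality
    intro x hx
    have key : AddSubgroup.closure
          (intPoints d ∪ {fun j : Fin d => ((k ^ ((j : ℕ) + 1) : ℤ) : ℝ) / (N : ℝ)})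
        ≤ AddSubgroup.comap f.toAddMonoidHom (Int.castAddHom ℝ).range := by
      rw [AddSubgroup.closure_le]
      rintro y (hy | hy)
      · choose z hz using hy
        have heq : f y = ((∑ j ∈ s, z j : ℤ) : ℝ) := by
          rw [hfx]; push_cast; exact Finset.sum_congr rfl fun j _ => hz j
        exact AddSubgroup.mem_comap.mpr ⟨∑ j ∈ s, z j, by simpa using heq.symm⟩
      · rw [Set.mem_singleton_iff] at hy
        subst hy
        obtain ⟨m, hm⟩ := hdiv
        have hNne : (N:ℝ) ≠ 0 := Nat.cast_ne_zero.mpr hN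
        have heq : f (fun j : Fin d => ((k ^ ((j:ℕ)+1) : ℤ):ℝ) / (N:ℝ)) = (m : ℝ) := by
          rw [hfx, ← Finset.sum_div, ← Int.cast_sum, hm]
          push_cast
          field_simp
        exact AddSubgroup.mem_comap.mpr ⟨m, by simpa using heq.symm⟩
    obtain ⟨m, hm⟩ := key hx
    exact ⟨m, by simpa using hm.symm⟩
  · -- width
    have himg : f '' convexHull ℝ (Set.range (stdVert d)) ⊆ Set.Icc (0:ℝ) 1 := by
      rw [f.image_convexHull]
      refine convexHull_min ?_ (convex_Icc 0 1)
      rintro y ⟨x, ⟨i, rfl⟩, rfl⟩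
      rw [hfx]
      have hval : ∑ j ∈ s, stdVert d i j
          = ((s.filter (fun j : Fin d => (i:ℕ) = (j:ℕ)+1)).card : ℝ) := by
        have h1 : ∑ j ∈ s, stdVert d i j
            = ∑ j ∈ s, (if (i:ℕ) = (j:ℕ)+1 then (1:ℝ) else 0) :=
          Finset.sum_congr rfl (fun j _ => rfl)
        rw [h1, ← Finset.sum_filter, Finset.sum_const, nsmul_eq_mul, mul_one]
      rw [hval]
      constructor
      · positivity
      · have : (s.filter (fun j : Fin d => (i:ℕ) = (j:ℕ)+1)).card ≤ 1 := by
          apply Finset.card_le_one.mpr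
          intro u hu v hv
          simp only [Finset.mem_filter] at hu hv
          have huv : (u:ℕ) = (v:ℕ) := by omega
          exact Fin.eq_of_val_eq huv
        exact_mod_cast this
    have hne : (f '' convexHull ℝ (Set.range (stdVert d))).Nonempty := by
      refine ⟨f (stdVert d 0), Set.mem_image_of_mem _ (subset_convexHull ℝ _ ⟨0, rfl⟩)⟩
    have h1 : sSup (f '' convexHull ℝ (Set.range (stdVert d))) ≤ 1 :=
      csSup_le hne fun x hx => (himg hx).2
    have h2 : 0 ≤ sInf (f '' convexHull ℝ (Set.range (stdVert d))) :=
      le_csInf hne fun x hx => (himg hx).1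
    linarith

theorem stmt3 (d N : ℕ) (hN : N.Prime) (hd : 1 ≤ d)
    (a b : ℕ) (ha : 2 ≤ a) (hb : 2 ≤ b) (hab : d + 1 = a * b) (k : ℤ)
    (hroot : (N : ℤ) ∣ ∑ i ∈ Finset.range (d+1), k ^ i) :
    ∃ f : (Fin d → ℝ) →ₗ[ℝ] ℝ, f ≠ 0 ∧
      (∀ x ∈ AddSubgroup.closure
          (intPoints d ∪ {fun j : Fin d => ((k ^ ((j : ℕ) + 1) : ℤ) : ℝ) / (N : ℝ)}),
        ∃ z : ℤ, f x = (z : ℝ)) ∧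
      sSup (f '' convexHull ℝ (Set.range (stdVert d)))
        - sInf (f '' convexHull ℝ (Set.range (stdVert d))) ≤ 1 := by
  classical
  rw [hab, geom_factor] at hroot
  have hNZ := hN.ne_zero
  have haled : a ≤ d := by nlinarith
  rcases (Int.Prime.dvd_mul' (by exact_mod_cast hN) hroot) with h | h
  · -- N ∣ ∑_{i<a} k^i ; take s = castLE image of Fin a
    refine key d N hNZ (Finset.univ.map (Fin.castLEEmb haled)) ?_ k ?_
    · exact ⟨Fin.castLE haled ⟨0, by omega⟩,
        Finset.mem_map.mpr ⟨⟨0, by omega⟩, Finset.mem_univ _, rfl⟩⟩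
    · rw [Finset.sum_map]
      have : ∑ j : Fin a, k ^ ((Fin.castLEEmb haled j : Fin d) : ℕ).succ
          = k * ∑ i ∈ Finset.range a, k ^ i := by
        rw [Finset.mul_sum, ← Fin.sum_univ_eq_sum_range (fun i => k * k ^ i)]
        refine Finset.sum_congr rfl fun j _ => ?_
        simp [pow_succ, mul_comm]
      simpa using this ▸ Dvd.dvd.mul_left h k
  · -- N ∣ ∑_{j<b} (k^a)^j ; take s = image of Fin b via j ↦ a*j
    have hlt : ∀ j : Fin b, a * (j:ℕ) < d := by
      intro j
      have : (j:ℕ) ≤ b - 1 := by omega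
      nlinarith [j.isLt]
    refine key d N hNZ (Finset.univ.image (fun j : Fin b => (⟨a * j, hlt j⟩ : Fin d))) ?_ k ?_
    · exact ⟨⟨0, by omega⟩, Finset.mem_image.mpr ⟨⟨0, by omega⟩, Finset.mem_univ _, by simp⟩⟩
    · rw [Finset.sum_image (by
        intro x _ y _ hxy
        have := congrArg Fin.val hxy
        simp only at this
        have ha0 : a ≠ 0 := by omega
        exact Fin.val_injective (Nat.eq_of_mul_eq_mul_left (by omega) this))]
      have : ∑ j : Fin b, k ^ ((a * (j:ℕ)) + 1)
          = k * ∑ j ∈ Finset.range b, (k^a) ^ j := by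
        rw [Finset.mul_sum, ← Fin.sum_univ_eq_sum_range (fun j => k * (k^a)^j)]
        refine Finset.sum_congr rfl fun j _ => ?_
        rw [← pow_mul, pow_succ, mul_comm]
      simpa using this ▸ Dvd.dvd.mul_left h k
end

section
/- Let d ≥ 2 be even, let m > 0 be a real number, and define u_k = c_{d−k}(m) · m^k + (−1)^{d+k−1} · c_{k−1}(m) · m^{d+1−k} for k ∈ {0, …, d}, where c_{−1}(m) = 0. Then (1) u_k > 0 for every odd k ∈ {1, 3, …, d−1}, and (2) u_k > u_{k+2} for every even k ∈ {0, 2, …, d−2}. -/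
/-- Shifted continuant numbers: `cseq m n = c_{n-1}(m)`, where `c_{-1} = 0`, `c_0 = 1`
and `c_k = c_{k-1} + m^2 c_{k-2}` for `k ≥ 1`. -/
noncomputable def cseq (m : ℝ) : ℕ → ℝ
  | 0 => 0
  | 1 => 1
  | (n+2) => cseq m (n+1) + m ^ 2 * cseq m n

lemma cseq_nonneg (m : ℝ) : ∀ n, 0 ≤ cseq m n
  | 0 => by simp [cseq]
  | 1 => by simp [cseq]
  | (n+2) => by
      have h1 := cseq_nonneg m (n+1)
      have h2 := cseq_nonneg m n
      simp only [cseq]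
      positivity

lemma cseq_pos (m : ℝ) : ∀ n, 0 < cseq m (n+1)
  | 0 => by simp [cseq]
  | (n+1) => by
      have h1 := cseq_pos m n
      have h2 := cseq_nonneg m n
      simp only [cseq]
      nlinarith [sq_nonneg m]

/-- `u_k = c_{d-k}(m)·m^k + (-1)^{d+k-1}·c_{k-1}(m)·m^{d+1-k}`, with `c_{-1} = 0`. -/
noncomputable def uval (d : ℕ) (m : ℝ) (k : ℕ) : ℝ :=
  cseq m (d - k + 1) * m ^ k + (-1 : ℝ) ^ (d + k - 1) * cseq m k * m ^ (d + 1 - k)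

theorem stmt8 (d : ℕ) (hd : 2 ≤ d) (hde : Even d) (m : ℝ) (hm : 0 < m) :
    (∀ k : ℕ, Odd k → k ≤ d - 1 → 0 < uval d m k) ∧
    (∀ k : ℕ, Even k → k ≤ d - 2 → uval d m (k + 2) < uval d m k) := by
  constructor
  · intro k hk hkd
    obtain ⟨j, hj⟩ : ∃ j, d = k + 1 + j := ⟨d - k - 1, by omega⟩
    have hje : Even j := by
      rcases hk with ⟨a, ha⟩; rcases hde with ⟨b, hb⟩
      exact ⟨b - a - 1, by omega⟩
    have hs1 : d - k + 1 = j + 2 := by omega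
    have hs2 : d + 1 - k = j + 2 := by omega
    have hs3 : d + k - 1 = 2*k + j := by omega
    have hsign : ((-1 : ℝ)) ^ (2*k + j) = 1 := by
      rw [pow_add, pow_mul]
      simp [hje.neg_one_pow]
    rw [uval, hs1, hs2, hs3, hsign, one_mul]
    have h1 := cseq_pos m (j+1)
    have h2 := cseq_nonneg m k
    have h3 := pow_pos hm k
    have h4 := pow_pos hm (j+2)
    nlinarith
  · intro k hk hkd
    obtain ⟨j, hj⟩ : ∃ j, d = k + 2 + j := ⟨d - k - 2, by omega⟩
    have hje : Even j := by
      rcases hk with ⟨a, ha⟩; rcases hde with ⟨b, hb⟩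
      exact ⟨b - a - 1, by omega⟩
    have hs1 : d - k + 1 = j + 3 := by omega
    have hs2 : d + 1 - k = j + 3 := by omega
    have hs3 : d + k - 1 = 2*k + j + 1 := by omega
    have hs4 : d - (k+2) + 1 = j + 1 := by omega
    have hs5 : d + 1 - (k+2) = j + 1 := by omega
    have hs6 : d + (k+2) - 1 = 2*k + j + 3 := by omega
    have hsign1 : ((-1 : ℝ)) ^ (2*k + j + 1) = -1 := by
      rw [pow_succ, pow_add, pow_mul]
      simp [hje.neg_one_pow]
    have hsign2 : ((-1 : ℝ)) ^ (2*k + j + 3) = -1 := by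
      rw [show 2*k + j + 3 = (2*k + j + 1) + 2 by ring, pow_add, hsign1]
      norm_num
    rw [uval, uval, hs1, hs2, hs3, hs4, hs5, hs6, hsign1, hsign2]
    have e1 : cseq m (j+3) = cseq m (j+2) + m^2 * cseq m (j+1) := rfl
    have e2 : cseq m (k+2) = cseq m (k+1) + m^2 * cseq m k := rfl
    have e3 : m ^ (k+2) = m^2 * m^k := by ring
    have e4 : m ^ (j+3) = m^2 * m^(j+1) := by ring
    rw [e1, e2, e3, e4]
    have h6 : 0 < cseq m (j+2) * m^k := mul_pos (cseq_pos m (j+1)) (pow_pos hm k)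
    have h7 : 0 < cseq m (k+1) * m^(j+1) := mul_pos (cseq_pos m k) (pow_pos hm (j+1))
    nlinarith [h6, h7]
end

section
/- Let d ≥ 2 be even and let m ≥ 1 be an integer. Then the lattice width of S(d,m) equals 2m; that is, for every vector w ∈ ℤ^{d+1} that is not constant (not all coordinates equal), max_{0≤i≤d} ⟨w, v^{(i)}⟩ − min_{0≤i≤d} ⟨w, v^{(i)}⟩ ≥ 2m, and there exists a non-constant w ∈ ℤ^{d+1} (e.g., a standard coordinate functional) for which this difference equals exactly 2m. -/
/-!
At vertex `i` the functional `w` takes the value `w i + m * (w (i + 1) - w (i - 1))`. Call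
`w (i + 1) - w (i - 1)` the central difference of `w` at `i`. It suffices to find `a`, `b` with
`w b ≤ w a`, a positive central difference at `a` and a negative one at `b`: the two values then
differ by at least `2 * m`. The central differences sum to zero, and vanish identically only when
`w (i + 2) = w i` for all `i`, which on a cycle of odd length `d + 1` forces `w` to be constant. If
no such pair existed, let `b` minimise `w` among the indices of negative central difference and
colour `i` by whether `w b ≤ w i`. Then a colour change between `i` and `i + 1` forces one between
`i + 1` and `i + 2`, hence everywhere, which is impossible on an odd cycle.

The coordinate functional `w = e₀` reads off column `0` of the vertex matrix, whose entries are
`1`, `m`, `-m` and `0`, so it attains width exactly `2 * m`.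
-/

/-- The `i`-th vertex of the circulant simplex `S(d,m)` (integer coordinates, indexed by
`Fin (d+1)`, i.e. modulo `d+1`): coordinate `j` is `1` if `j = i`, `m` if `j ≡ i+1`,
`-m` if `j ≡ i-1`, and `0` otherwise. -/
def vvec (d : ℕ) (m : ℤ) (i : Fin (d+1)) : Fin (d+1) → ℤ :=
  fun j => if j = i then 1 else if j = i + 1 then m else if j = i - 1 then -m else 0

open Fin.CommRing Function

namespace Fin

variable {n : ℕ} [NeZero n]

theorem induction_add_one {p : Fin n → Prop} (hp : ∀ i, p i → p (i + 1)) {i : Fin n}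
    (hi : p i) (j : Fin n) : p j := by
  have hk : ∀ k : ℕ, p (i + k) := by
    intro k
    induction k with
    | zero => simpa using hi
    | succ k ih => simpa [add_assoc] using hp _ ih
  simpa using hk (j - i).val

theorem exists_nsmul_two_eq_one (hn : Odd n) : ∃ k : ℕ, k • (2 : Fin n) = 1 := by
  obtain ⟨k, rfl⟩ := hn
  refine ⟨k + 1, ?_⟩
  have : ((2 * k + 1 : ℕ) : Fin (2 * k + 1)) = 0 := Fin.natCast_self _
  rw [nsmul_eq_mul]
  push_cast at this ⊢
  linear_combination this

theorem periodic_one_of_periodic_two {α : Type*} {f : Fin n → α} (hn : Odd n)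
    (hf : Periodic f 2) : Periodic f 1 := by
  obtain ⟨k, hk⟩ := exists_nsmul_two_eq_one hn
  simpa [hk] using hf.nsmul k

theorem not_xor_add_one_of_odd (hn : Odd n) {P : Fin n → Prop}
    (hP : ∀ i, Xor (P i) (P (i + 1)) → Xor (P (i + 1)) (P (i + 2))) (i : Fin n) :
    ¬Xor (P i) (P (i + 1)) := by
  intro hi
  have hall : ∀ j, Xor (P j) (P (j + 1)) :=
    induction_add_one (p := fun j => Xor (P j) (P (j + 1)))
      (fun j hj => by simpa [add_assoc, one_add_one_eq_two] using hP j hj) hi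
  have hper : Periodic P 2 := fun j => by
    have := hall j
    have := hall (j + 1)
    rw [add_assoc, one_add_one_eq_two] at this
    unfold Xor at *
    ext; tauto
  rw [periodic_one_of_periodic_two hn hper i] at hi
  simp [Xor] at hi

theorem two_ne_zero_of_two_lt (hn : 2 < n) : (2 : Fin n) ≠ 0 := by
  rw [← Nat.cast_ofNat, Ne, Fin.natCast_eq_zero]
  exact Nat.not_dvd_of_pos_of_lt two_pos hn

end Fin

namespace CirculantSimplex

variable {n : ℕ} [NeZero n]

def centralDiff (w : Fin n → ℤ) (i : Fin n) : ℤ := w (i + 1) - w (i - 1)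

theorem sum_centralDiff (w : Fin n → ℤ) : ∑ i, centralDiff w i = 0 := by
  unfold centralDiff
  rw [Finset.sum_sub_distrib, sub_eq_zero]
  exact (Equiv.sum_comp (Equiv.addRight 1) w).trans (Equiv.sum_comp (Equiv.subRight 1) w).symm

theorem centralDiff_neg (w : Fin n → ℤ) (i : Fin n) : centralDiff (-w) i = -centralDiff w i := by
  simp only [centralDiff, Pi.neg_apply]
  ring

theorem centralDiff_add_one (w : Fin n → ℤ) (i : Fin n) :
    centralDiff w (i + 1) = w (i + 2) - w i := by
  rw [centralDiff, add_sub_cancel_right, add_assoc, one_add_one_eq_two]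

theorem exists_centralDiff_pos (hn : Odd n) {w : Fin n → ℤ} (hw : ∃ i j, w i ≠ w j) :
    ∃ a, 0 < centralDiff w a := by
  obtain ⟨i, j, hij⟩ := hw
  by_contra! hnonpos
  have hzero : ∀ a, centralDiff w a = 0 :=
    fun a => (Finset.sum_eq_zero_iff_of_nonpos fun a _ => hnonpos a).mp (sum_centralDiff w) a
      (Finset.mem_univ a)
  have hper : Periodic w 1 := by
    refine Fin.periodic_one_of_periodic_two hn fun a => ?_
    rw [← sub_eq_zero, ← centralDiff_add_one, hzero]
  exact hij (Fin.induction_add_one (p := fun a => w a = w j) (fun a ha => (hper a).trans ha) rfl i)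

theorem exists_centralDiff_pos_neg_of_le (hn : Odd n) {w : Fin n → ℤ} (hw : ∃ i j, w i ≠ w j) :
    ∃ a b, w b ≤ w a ∧ 0 < centralDiff w a ∧ centralDiff w b < 0 := by
  obtain ⟨a, ha⟩ := exists_centralDiff_pos hn hw
  obtain ⟨b₀, hb₀⟩ : ∃ b, centralDiff w b < 0 := by
    obtain ⟨i, j, hij⟩ := hw
    obtain ⟨b, hb⟩ := exists_centralDiff_pos hn (w := -w) ⟨i, j, by simpa using hij⟩
    exact ⟨b, by simpa [centralDiff_neg] using hb⟩
  obtain ⟨b, hb, hmin⟩ := Finset.exists_min_image {b | centralDiff w b < 0} w ⟨b₀, by simpa⟩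
  rw [Finset.mem_filter_univ] at hb
  by_contra! h
  set P : Fin n → Prop := fun i => w b ≤ w i
  have hhigh : ∀ i, P i → centralDiff w i ≤ 0 := fun i hi => by
    by_contra! hpos
    exact (h i b hi hpos).not_gt hb
  have hlow : ∀ i, ¬P i → 0 ≤ centralDiff w i := fun i hi => by
    by_contra! hneg
    exact hi (hmin i (by simpa))
  have hchange : ∀ i, Xor (P i) (P (i + 1)) → Xor (P (i + 1)) (P (i + 2)) := by
    intro i hi
    have hdiff := centralDiff_add_one w i
    rcases hi with ⟨hPi, hPi1⟩ | ⟨hPi1, hPi⟩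
    · exact Or.inr ⟨show w b ≤ w (i + 2) by linarith [hlow _ hPi1], hPi1⟩
    · exact Or.inl ⟨hPi1, show ¬w b ≤ w (i + 2) by linarith [hhigh _ hPi1]⟩
  have hPa : P a := Fin.induction_add_one (p := P)
    (fun i hi => by simpa [Xor, hi] using Fin.not_xor_add_one_of_odd hn hchange i) le_rfl a
  exact (hhigh a hPa).not_gt ha

theorem vvec_apply {d : ℕ} (hd : 2 ≤ d) (m : ℤ) (i j : Fin (d + 1)) :
    vvec d m i j = (if j = i then 1 else 0) + (if j = i + 1 then m else 0)
      - (if j = i - 1 then m else 0) := by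
  have h1 : (1 : Fin (d + 1)) ≠ 0 := Fin.one_eq_zero_iff.not.mpr (by omega)
  have h2 : (2 : Fin (d + 1)) ≠ 0 := Fin.two_ne_zero_of_two_lt (by omega)
  have hi1 : i + 1 ≠ i := fun h => h1 (by linear_combination h)
  have hi2 : i - 1 ≠ i := fun h => h1 (by linear_combination -h)
  have hi3 : i + 1 ≠ i - 1 := fun h => h2 (by linear_combination h)
  unfold vvec
  split_ifs <;> simp_all

theorem sum_mul_vvec {d : ℕ} (hd : 2 ≤ d) (m : ℤ) (w : Fin (d + 1) → ℤ) (i : Fin (d + 1)) :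
    ∑ j, w j * vvec d m i j = w i + m * centralDiff w i := by
  simp only [vvec_apply hd, mul_sub, mul_add, mul_ite, mul_one, mul_zero, Finset.sum_sub_distrib,
    Finset.sum_add_distrib, Finset.sum_ite_eq', Finset.mem_univ, ↓reduceIte, centralDiff]
  ring

theorem vvec_sub_one_self {d : ℕ} (hd : d ≠ 0) (m : ℤ) (j : Fin (d + 1)) :
    vvec d m (j - 1) j = m := by
  have h1 : (1 : Fin (d + 1)) ≠ 0 := Fin.one_eq_zero_iff.not.mpr (by omega)
  have : j ≠ j - 1 := fun h => h1 (by linear_combination h)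
  simp [vvec, this]

theorem vvec_add_one_self {d : ℕ} (hd : 2 ≤ d) (m : ℤ) (j : Fin (d + 1)) :
    vvec d m (j + 1) j = -m := by
  have h1 : (1 : Fin (d + 1)) ≠ 0 := Fin.one_eq_zero_iff.not.mpr (by omega)
  have h2 : (2 : Fin (d + 1)) ≠ 0 := Fin.two_ne_zero_of_two_lt (by omega)
  have : j ≠ j + 1 + 1 := fun h => h2 (by linear_combination -h)
  simp [vvec, h1, this]

theorem sup'_vvec_apply {d : ℕ} (hd : d ≠ 0) {m : ℤ} (hm : 1 ≤ m) (j : Fin (d + 1)) :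
    Finset.univ.sup' Finset.univ_nonempty (fun i => vvec d m i j) = m := by
  refine le_antisymm (Finset.sup'_le _ _ fun i _ => ?_)
    (Finset.le_sup'_of_le _ (Finset.mem_univ (j - 1)) (vvec_sub_one_self hd m j).ge)
  unfold vvec
  split_ifs <;> omega

theorem inf'_vvec_apply {d : ℕ} (hd : 2 ≤ d) {m : ℤ} (hm : 0 ≤ m) (j : Fin (d + 1)) :
    Finset.univ.inf' Finset.univ_nonempty (fun i => vvec d m i j) = -m := by
  refine le_antisymm
    (Finset.inf'_le_of_le _ (Finset.mem_univ (j + 1)) (vvec_add_one_self hd m j).le)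
    (Finset.le_inf' _ _ fun i _ => ?_)
  unfold vvec
  split_ifs <;> omega

end CirculantSimplex

open CirculantSimplex Finset in
theorem stmt11 (d : ℕ) (hd : 2 ≤ d) (hde : Even d) (m : ℤ) (hm : 1 ≤ m) :
    (∀ w : Fin (d+1) → ℤ, (∃ i j, w i ≠ w j) →
      2 * m ≤ (Finset.univ.sup' Finset.univ_nonempty
                  (fun i : Fin (d+1) => ∑ j, w j * vvec d m i j))
              - (Finset.univ.inf' Finset.univ_nonempty
                  (fun i : Fin (d+1) => ∑ j, w j * vvec d m i j))) ∧
    (∃ w : Fin (d+1) → ℤ, (∃ i j, w i ≠ w j) ∧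
      (Finset.univ.sup' Finset.univ_nonempty
                  (fun i : Fin (d+1) => ∑ j, w j * vvec d m i j))
              - (Finset.univ.inf' Finset.univ_nonempty
                  (fun i : Fin (d+1) => ∑ j, w j * vvec d m i j)) = 2 * m) := by
  constructor
  · intro w hw
    obtain ⟨a, b, hab, ha, hb⟩ := exists_centralDiff_pos_neg_of_le hde.add_one hw
    have hsup := le_sup' (fun i => ∑ j, w j * vvec d m i j) (mem_univ a)
    have hinf := inf'_le (fun i => ∑ j, w j * vvec d m i j) (mem_univ b)
    rw [sum_mul_vvec hd] at hsup hinf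
    nlinarith
  · refine ⟨Pi.single 0 1, ⟨0, 1, ?_⟩, ?_⟩
    · simp [Fin.one_eq_zero_iff.not.mpr (by omega : d + 1 ≠ 1)]
    · simp only [Pi.single_apply, ite_mul, one_mul, zero_mul, sum_ite_eq', mem_univ, if_true]
      rw [sup'_vvec_apply (by omega) hm, inf'_vvec_apply hd (by omega)]
      ring
end

section
/- Let d ≥ 2 be even and let m > 0 be a real number, and set α = arcsinh(1/(2m)). Then c_{d−1}(m) · cosh(α) = m^{d−1} · sinh(d·α). -/
theorem stmt17 (d : ℕ) (hd : 2 ≤ d) (hde : Even d) (m : ℝ) (hm : 0 < m) :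
    cseq m d * Real.cosh (Real.arsinh (1 / (2 * m)))
      = m ^ (d - 1) * Real.sinh (d * Real.arsinh (1 / (2 * m))) := by
  set α := Real.arsinh (1 / (2 * m)) with hαdef
  have hm0 : m ≠ 0 := ne_of_gt hm
  have hs : Real.sinh α = 1 / (2 * m) := Real.sinh_arsinh _
  set a : ℝ := m * Real.exp α with ha_def
  set b : ℝ := -(m * Real.exp (-α)) with hb_def
  have hexp : Real.exp α * Real.exp (-α) = 1 := by
    rw [← Real.exp_add]; simp
  have hab : a * b = -m ^ 2 := by
    rw [ha_def, hb_def]; nlinarith [hexp]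
  have hsum : a + b = 1 := by
    have hsinh : Real.exp α - Real.exp (-α) = 2 * Real.sinh α := by
      rw [Real.sinh_eq]; ring
    rw [ha_def, hb_def]
    have : m * (Real.exp α - Real.exp (-α)) = 1 := by
      rw [hsinh, hs]; field_simp
    linarith [this]
  have key : ∀ k : ℕ,
      2 * m * Real.cosh α * cseq m k = a ^ k - b ^ k ∧
      2 * m * Real.cosh α * cseq m (k + 1) = a ^ (k + 1) - b ^ (k + 1) := by
    intro k
    induction k with
    | zero =>
      constructor
      · simp [cseq]
      · have hcosh : Real.cosh α = (Real.exp α + Real.exp (-α)) / 2 := Real.cosh_eq α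
        simp only [cseq, pow_one, pow_zero]
        rw [hcosh, ha_def, hb_def]; ring
    | succ n ih =>
      refine ⟨ih.2, ?_⟩
      have hc : cseq m (n + 2) = cseq m (n + 1) + m ^ 2 * cseq m n := rfl
      rw [hc]
      have e1 : a ^ (n + 2) - b ^ (n + 2)
          = (a ^ (n + 1) - b ^ (n + 1)) * (a + b) - a * b * (a ^ n - b ^ n) := by
        ring
      rw [e1, hsum, hab]
      rw [mul_add, ih.2]
      have : 2 * m * Real.cosh α * (m ^ 2 * cseq m n) = m ^ 2 * (a ^ n - b ^ n) := by
        rw [← ih.1]; ring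
      rw [this]; ring
  obtain ⟨e, rfl⟩ : ∃ e, d = e + 1 := ⟨d - 1, by omega⟩
  have hk := (key (e + 1)).1
  have hae : a ^ (e + 1) = m ^ (e + 1) * Real.exp ((e + 1 : ℕ) * α) := by
    rw [ha_def, mul_pow, Real.exp_nat_mul]
  have hbe : b ^ (e + 1) = m ^ (e + 1) * Real.exp (-((e + 1 : ℕ) * α)) := by
    rw [hb_def, hde.neg_pow, mul_pow]
    congr 1
    rw [← Real.exp_nat_mul]
    congr 1
    push_cast
    ring
  have hsinh2 : Real.sinh ((e + 1 : ℕ) * α)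
      = (Real.exp ((e + 1 : ℕ) * α) - Real.exp (-((e + 1 : ℕ) * α))) / 2 := Real.sinh_eq _
  rw [hae, hbe] at hk
  have hfin : 2 * m * (cseq m (e + 1) * Real.cosh α)
      = 2 * m * (m ^ (e + 1 - 1) * Real.sinh ((e + 1 : ℕ) * α)) := by
    have : e + 1 - 1 = e := rfl
    rw [this, hsinh2]
    calc 2 * m * (cseq m (e + 1) * Real.cosh α)
        = 2 * m * Real.cosh α * cseq m (e + 1) := by ring
      _ = m ^ (e + 1) * Real.exp ((e + 1 : ℕ) * α)
          - m ^ (e + 1) * Real.exp (-((e + 1 : ℕ) * α)) := hk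
      _ = 2 * m * (m ^ e * ((Real.exp ((e + 1 : ℕ) * α) - Real.exp (-((e + 1 : ℕ) * α))) / 2)) := by
          rw [pow_succ]; ring
  have h2m : (2 * m) ≠ 0 := by positivity
  exact mul_left_cancel₀ h2m hfin
end

section
/- Let f : ℕ → ℝ be any function such that for every n ≥ 1, f(2n) > 0 and f(2n)^{2n−1} = c_{2n−1}(f(2n)) (i.e., f(2n) is the unique positive solution m_0(d) of m^{d−1} = c_{d−1}(m) for d = 2n). Then the sequence n ↦ f(2n)/n converges to 1/arcsinh(1) = 1/ln(1+√2) as n → ∞; equivalently, 2·m_0(d)/d → 1/arcsinh(1) as d → ∞ along even d. -/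
/-!
Put `t = arsinh (1 / (2m))`. Then `m e^t` and `-m e^{-t}` are the two roots of `x² = x + m²`, so
Binet's formula for the continuants reads `c_{2n-1}(m) · m cosh t = m^{2n} sinh (2nt)`, and the
defining equation of `m₀(2n)` becomes `cosh t = sinh (2nt)`. This forces `2nt` to stay bounded,
hence `t → 0`, hence `2nt = arsinh (cosh t) → arsinh 1`; since `sinh t ~ t` and
`2n sinh t = n / m`, we get `m / n → 1 / arsinh 1`.
-/

open Filter

open Topology Real

theorem cseq_mul_sub {m p q : ℝ} (hsum : p + q = 1) (hprod : p * q = -m ^ 2) (k : ℕ) :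
    cseq m k * (p - q) = p ^ k - q ^ k := by
  induction k using Nat.twoStepInduction with
  | zero => simp [cseq]
  | one => simp [cseq]
  | more k ih₀ ih₁ =>
    have hp : p ^ (k + 2) = p ^ (k + 1) + m ^ 2 * p ^ k := by
      linear_combination p ^ k * (p * hsum - hprod)
    have hq : q ^ (k + 2) = q ^ (k + 1) + m ^ 2 * q ^ k := by
      linear_combination q ^ k * (q * hsum - hprod)
    rw [cseq, hp, hq]
    linear_combination ih₁ + m ^ 2 * ih₀

theorem cseq_two_mul_mul_cosh {m t : ℝ} (ht : 2 * m * sinh t = 1) (n : ℕ) :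
    cseq m (2 * n) * (m * cosh t) = m ^ (2 * n) * sinh (2 * n * t) := by
  have hsum : m * exp t + -(m * exp (-t)) = 1 := by
    rw [← ht, sinh_eq]; ring
  have hprod : m * exp t * -(m * exp (-t)) = -m ^ 2 := by
    rw [mul_neg, mul_mul_mul_comm, ← exp_add, add_neg_cancel, exp_zero]; ring
  have h := cseq_mul_sub hsum hprod (2 * n)
  rw [Even.neg_pow (even_two_mul n), mul_pow, mul_pow, ← exp_nat_mul, ← exp_nat_mul,
    mul_neg] at h
  rw [cosh_eq, sinh_eq]
  push_cast at h
  linear_combination h / 2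

theorem cosh_eq_sinh_of_pow_eq_cseq {m t : ℝ} {n : ℕ} (hm : 0 < m) (hn : 1 ≤ n)
    (ht : 2 * m * sinh t = 1) (h : m ^ (2 * n - 1) = cseq m (2 * n)) :
    cosh t = sinh (2 * n * t) := by
  have hpow : m ^ (2 * n - 1) * m = m ^ (2 * n) := by
    rw [← pow_succ]; congr 1; omega
  have key := cseq_two_mul_mul_cosh ht n
  rw [← h, ← mul_assoc, hpow] at key
  exact mul_left_cancel₀ (pow_pos hm _).ne' key

theorem mul_le_of_cosh_eq_sinh_mul {t x : ℝ} (ht : 0 ≤ t) (hx : 2 ≤ x)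
    (h : cosh t = sinh (x * t)) : x * t ≤ 3 / 2 := by
  have h2t : sinh (2 * t) ≤ cosh t := h ▸ sinh_le_sinh.2 (by nlinarith)
  rw [sinh_two_mul] at h2t
  have hsinh : sinh t ≤ 1 / 2 := by nlinarith [cosh_pos t]
  have hcosh : cosh t ≤ 3 / 2 := by
    nlinarith [cosh_sq t, cosh_pos t, sinh_nonneg_iff.2 ht]
  calc x * t ≤ sinh (x * t) := self_le_sinh_iff.2 (by positivity)
    _ = cosh t := h.symm
    _ ≤ 3 / 2 := hcosh

theorem tendsto_sinh_div_self : Tendsto (fun x => sinh x / x) (𝓝[≠] 0) (𝓝 1) := by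
  have h := (hasDerivAt_iff_tendsto_slope.1 (hasDerivAt_sinh 0))
  rw [cosh_zero] at h
  refine h.congr fun x => ?_
  simp [slope_def_field]

theorem tendsto_two_mul_sinh_of_cosh_eq_sinh {t : ℕ → ℝ}
    (h : ∀ᶠ n : ℕ in atTop, 0 < t n ∧ cosh (t n) = sinh (2 * n * t n)) :
    Tendsto (fun n : ℕ => 2 * n * sinh (t n)) atTop (𝓝 (arsinh 1)) := by
  have ht : Tendsto t atTop (𝓝 0) := by
    refine tendsto_of_tendsto_of_tendsto_of_le_of_le' tendsto_const_nhds
      (tendsto_const_div_atTop_nhds_zero_nat (3 / 4)) ?_ ?_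
    · filter_upwards [h] with n hn using hn.1.le
    · filter_upwards [h, eventually_ge_atTop 1] with n ⟨hpos, heq⟩ hn
      have hn' : (1 : ℝ) ≤ n := by exact_mod_cast hn
      have := mul_le_of_cosh_eq_sinh_mul hpos.le (by linarith) heq
      rw [le_div_iff₀ (by positivity)]
      linarith
  have hmul : Tendsto (fun n : ℕ => 2 * n * t n) atTop (𝓝 (arsinh 1)) := by
    have hc := ((continuous_arsinh.comp continuous_cosh).tendsto 0).comp ht
    rw [Function.comp_def, Function.comp_apply, cosh_zero] at hc
    refine hc.congr' ?_
    filter_upwards [h] with n ⟨_, heq⟩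
    rw [Function.comp_apply, heq, arsinh_sinh]
  have hdiv : Tendsto (fun n => sinh (t n) / t n) atTop (𝓝 1) :=
    tendsto_sinh_div_self.comp <| tendsto_nhdsWithin_of_tendsto_nhds_of_eventually_within _ ht <|
      by filter_upwards [h] with n hn using hn.1.ne'
  refine (mul_one (arsinh 1) ▸ hmul.mul hdiv).congr' ?_
  filter_upwards [h] with n ⟨hpos, _⟩
  field_simp

theorem stmt18 (f : ℕ → ℝ)
    (hf : ∀ n : ℕ, 1 ≤ n →
      0 < f (2 * n) ∧ (f (2 * n)) ^ (2 * n - 1) = cseq (f (2 * n)) (2 * n)) :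
    Tendsto (fun n : ℕ => f (2 * n) / (n : ℝ)) atTop (nhds (1 / Real.arsinh 1)) := by
  set t : ℕ → ℝ := fun n => arsinh (1 / (2 * f (2 * n)))
  have hsinh : ∀ n, 1 ≤ n → 2 * f (2 * n) * sinh (t n) = 1 := fun n hn => by
    simp only [t, sinh_arsinh]
    field_simp [(hf n hn).1.ne']
  have ht : ∀ᶠ n : ℕ in atTop, 0 < t n ∧ cosh (t n) = sinh (2 * n * t n) := by
    filter_upwards [eventually_ge_atTop 1] with n hn
    obtain ⟨hpos, heq⟩ := hf n hn
    exact ⟨arsinh_pos_iff.2 (by positivity),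
      cosh_eq_sinh_of_pow_eq_cseq hpos hn (hsinh n hn) heq⟩
  have hlim := (tendsto_two_mul_sinh_of_cosh_eq_sinh ht).inv₀ (arsinh_pos_iff.2 one_pos).ne'
  rw [← one_div] at hlim
  refine hlim.congr' ?_
  filter_upwards [eventually_ge_atTop 1] with n hn
  have h2 := hsinh n hn
  have hs : sinh (t n) ≠ 0 := right_ne_zero_of_mul_eq_one h2
  field_simp
  linear_combination -h2
end
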